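/- arXiv:1306.1802 — 6 statements merged into one kernel-verified Lean document; each statement's English description precedes it below -/
import Mathlib

section
/- Let p be a prime and x ∈ Q_p with p-adic valuation v(x) < 0. Then x is a cube in Q_p if and only if x + 27 is a cube in Q_p. -/
theorem stmt_8 (p : ℕ) [Fact p.Prime] (x : ℚ_[p]) (hx : x.valuation < 0) :
    (∃ w : ℚ_[p], w ^ 3 = x) ↔ (∃ w : ℚ_[p], w ^ 3 = x + 27) := by
  have hp1 : (1 : ℝ) < p := by exact_mod_cast (Fact.out : p.Prime).one_lt
  have hx0 : x ≠ 0 := by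
    intro h; rw [h, Padic.valuation_zero] at hx; exact lt_irrefl 0 hx
  have hnx : 1 < ‖x‖ := by
    rw [Padic.norm_eq_zpow_neg_valuation hx0]
    exact one_lt_zpow₀ hp1 (by omega)
  set c : ℚ_[p] := 27 / x with hc
  have h27 : ((27 : ℚ_[p])) ≠ 0 := by norm_num
  have h27le : ‖(27 : ℚ_[p])‖ ≤ 1 := by
    simpa using Padic.norm_int_le_one (p := p) 27
  have hnc : ‖c‖ < ‖(27 : ℚ_[p])‖ := by
    rw [hc, norm_div]
    calc ‖(27:ℚ_[p])‖ / ‖x‖ < ‖(27:ℚ_[p])‖ / 1 := by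
          apply div_lt_div_of_pos_left (norm_pos_iff.mpr h27) one_pos hnx
      _ = ‖(27:ℚ_[p])‖ := by ring
  have hcle : ‖c‖ ≤ 1 := le_of_lt (lt_of_lt_of_le hnc h27le)
  set C : ℤ_[p] := ⟨c, hcle⟩ with hC
  set F : Polynomial ℤ_[p] := Polynomial.X ^ 3 - Polynomial.C (1 + C) with hF
  have hev : F.eval 1 = -C := by simp [hF]
  have hder : F.derivative.eval 1 = 3 := by
    simp [hF, Polynomial.derivative_pow]
  have h3 : ‖(3 : ℤ_[p])‖ ≤ 1 := PadicInt.norm_le_one 3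
  have h27eq : ‖(27 : ℚ_[p])‖ = ‖(3 : ℤ_[p])‖ ^ 3 := by
    have : ((27 : ℚ_[p])) = ((3:ℤ_[p]) : ℚ_[p]) ^ 3 := by rw [show ((3:ℤ_[p]):ℚ_[p]) = ((3:ℕ):ℚ_[p]) by norm_cast]; norm_num
    rw [this, norm_pow, PadicInt.padic_norm_e_of_padicInt]
  have hnorm : ‖F.eval 1‖ < ‖F.derivative.eval 1‖ ^ 2 := by
    rw [hev, hder, norm_neg]
    have : ‖C‖ = ‖c‖ := rfl
    rw [this]
    calc ‖c‖ < ‖(27:ℚ_[p])‖ := hnc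
      _ = ‖(3:ℤ_[p])‖^3 := h27eq
      _ ≤ ‖(3:ℤ_[p])‖^2 := by
          nlinarith [norm_nonneg (3:ℤ_[p])]
  obtain ⟨z, hz, -, -, -⟩ := hensels_lemma hnorm
  have hz3 : (z : ℚ_[p]) ^ 3 = 1 + c := by
    have : z ^ 3 = 1 + C := by
      have := sub_eq_zero.mp (by simpa [hF] using hz)
      simpa using this
    calc (z : ℚ_[p]) ^ 3 = ((z^3 : ℤ_[p]) : ℚ_[p]) := by push_cast; ring
      _ = ((1 + C : ℤ_[p]) : ℚ_[p]) := by rw [this]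
      _ = 1 + c := by push_cast [hC]; rfl
  set u : ℚ_[p] := (z : ℚ_[p]) with hu
  have hux : u ^ 3 * x = x + 27 := by
    rw [hz3, hc]; field_simp
  have hu0 : u ≠ 0 := by
    intro h
    rw [h] at hz3
    have : ‖c‖ = 1 := by
      have h1 : c = -1 := by linear_combination -hz3
      rw [h1]; simp
    rw [this] at hnc
    exact absurd (lt_of_lt_of_le hnc h27le) (lt_irrefl 1)
  constructor
  · rintro ⟨w, rfl⟩
    exact ⟨w * u, by linear_combination hux⟩
  · rintro ⟨w, hw⟩
    refine ⟨w / u, ?_⟩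
    have hu3 : u ^ 3 ≠ 0 := pow_ne_zero _ hu0
    field_simp
    linear_combination hw - hux
end

section
/- For every prime p and every x ∈ Q_p: if x + 4 is a square in Q_p and x is not a square in Q_p, then x ∈ Z_p. -/
open Polynomial

lemma aux_sq_near_one {p : ℕ} [Fact p.Prime] (u : ℤ_[p])
    (h : ‖1 - u‖ < ‖(2 : ℤ_[p])‖ ^ 2) : IsSquare u := by
  have hnorm : ‖(X ^ 2 - C u : Polynomial ℤ_[p]).eval 1‖ <
      ‖(X ^ 2 - C u : Polynomial ℤ_[p]).derivative.eval 1‖ ^ 2 := by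
    simpa [one_add_one_eq_two] using h
  obtain ⟨z, hz, -⟩ := hensels_lemma hnorm
  have hz' : z ^ 2 - u = 0 := by simpa using hz
  exact ⟨z, ((sub_eq_zero.mp hz').symm.trans (sq z))⟩

theorem stmt_9 (p : ℕ) [Fact p.Prime] (x : ℚ_[p])
    (h1 : IsSquare (x + 4)) (h2 : ¬ IsSquare x) :
    ∃ z : ℤ_[p], (z : ℚ_[p]) = x := by
  by_cases hx : ‖x‖ ≤ 1
  · exact ⟨⟨x, hx⟩, rfl⟩
  push_neg at hx
  exfalso
  obtain ⟨y, hy⟩ := h1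
  have h4 : ‖(4 : ℚ_[p])‖ ≤ 1 := by
    have := Padic.norm_int_le_one (p := p) 4
    simpa using this
  have hxy : ‖x + 4‖ = ‖x‖ := by
    rw [Padic.add_eq_max_of_ne (by intro h; rw [h] at hx; exact absurd h4 (not_le.2 hx))]
    exact max_eq_left (le_of_lt (lt_of_le_of_lt h4 hx))
  have hyn : 1 < ‖y‖ := by
    have : ‖y‖ * ‖y‖ = ‖x‖ := by rw [← norm_mul, ← hy, hxy]
    nlinarith [norm_nonneg y]
  have hy0 : y ≠ 0 := by intro h; rw [h] at hyn; norm_num at hyn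
  set t : ℚ_[p] := 4 / (y * y) with ht
  have h2n : ‖(2 : ℚ_[p])‖ ^ 2 = ‖(4 : ℚ_[p])‖ := by
    rw [← norm_pow]; norm_num
  have htn : ‖t‖ < ‖(2 : ℚ_[p])‖ ^ 2 := by
    rw [ht, norm_div, norm_mul, h2n]
    have h4pos : 0 < ‖(4 : ℚ_[p])‖ := by
      simp [norm_pos_iff]
    have hyy1 : 1 < ‖y‖ * ‖y‖ := by nlinarith
    rw [div_lt_iff₀ (by nlinarith)]
    calc ‖(4 : ℚ_[p])‖ = ‖(4 : ℚ_[p])‖ * 1 := by ring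
      _ < ‖(4 : ℚ_[p])‖ * (‖y‖ * ‖y‖) := by exact mul_lt_mul_of_pos_left hyy1 h4pos
  have htn1 : ‖t‖ < 1 := lt_of_lt_of_le htn (by rw [h2n]; exact h4)
  have hun : ‖1 - t‖ ≤ 1 := by
    calc ‖1 - t‖ = ‖(1 : ℚ_[p]) + (-t)‖ := by ring_nf
      _ ≤ max ‖(1 : ℚ_[p])‖ ‖-t‖ := Padic.nonarchimedean _ _
      _ ≤ 1 := by rw [norm_one, norm_neg]; exact max_le le_rfl htn1.le
  set u : ℤ_[p] := ⟨1 - t, hun⟩ with hu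
  have husq : IsSquare u := by
    apply aux_sq_near_one
    have e1 : ((1 - u : ℤ_[p]) : ℚ_[p]) = t := by
      rw [PadicInt.coe_sub, PadicInt.coe_one]
      show 1 - (1 - t) = t
      ring
    have e2 : ‖(1 - u : ℤ_[p])‖ = ‖t‖ := by rw [PadicInt.norm_def, e1]
    have e3 : ‖(2 : ℤ_[p])‖ = ‖(2 : ℚ_[p])‖ := by
      rw [PadicInt.norm_def]; norm_cast
    rw [e2, e3]
    exact htn
  obtain ⟨s, hs⟩ := husq
  apply h2
  refine ⟨y * (s : ℚ_[p]), ?_⟩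
  have hus : (u : ℚ_[p]) = (s : ℚ_[p]) * (s : ℚ_[p]) := by exact_mod_cast congrArg _ hs
  have hut : (u : ℚ_[p]) = 1 - t := rfl
  have hyy : y * y ≠ 0 := mul_ne_zero hy0 hy0
  have key : y * y * (1 - t) = y * y - 4 := by
    rw [ht]; field_simp
  have : x = y * y * (1 - t) := by rw [key]; linear_combination hy
  rw [this, ← hut, hus]
  ring
end

section
/- For every prime p and every x ∈ Q_p: if x + 27 is a cube in Q_p and x is not a cube in Q_p, then x ∈ Z_p. -/
theorem stmt_10 (p : ℕ) [Fact p.Prime] (x : ℚ_[p])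
    (h1 : ∃ w : ℚ_[p], w ^ 3 = x + 27) (h2 : ¬ ∃ w : ℚ_[p], w ^ 3 = x) :
    ∃ z : ℤ_[p], (z : ℚ_[p]) = x := by
  by_contra h
  push_neg at h
  have hx : 1 < ‖x‖ := by
    by_contra hle
    push_neg at hle
    exact h ⟨x, hle⟩ rfl
  obtain ⟨w, hw⟩ := h1
  have h27 : ‖(27 : ℚ_[p])‖ ≤ 1 := by
    have e : ((27 : ℤ_[p]) : ℚ_[p]) = (27 : ℚ_[p]) := by norm_cast
    rw [← e]; exact PadicInt.norm_le_one _
  have hxw : ‖x + 27‖ = ‖x‖ := by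
    rw [Padic.add_eq_max_of_ne (by linarith [h27] : ‖x‖ ≠ ‖(27 : ℚ_[p])‖)]
    exact max_eq_left (by linarith)
  have hwn : ‖w‖ ^ 3 = ‖x‖ := by rw [← norm_pow, hw, hxw]
  have hw1 : 1 < ‖w‖ := by
    by_contra hle
    push_neg at hle
    have := pow_le_one₀ (norm_nonneg w) hle (n := 3)
    rw [hwn] at this
    linarith
  have hw0 : w ≠ 0 := by intro h0; rw [h0, norm_zero] at hw1; linarith
  have hw3ne : w ^ 3 ≠ 0 := pow_ne_zero _ hw0
  have hwilt : ‖w⁻¹‖ < 1 := by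
    rw [norm_inv]
    exact inv_lt_one_of_one_lt₀ hw1
  have hwi : ‖w⁻¹‖ ≤ (p : ℝ) ^ (-1 : ℤ) := by
    rw [Padic.norm_le_pow_iff_norm_lt_pow_add_one]
    simpa using hwilt
  have hxne : ‖x‖ ≠ 0 := by positivity
  have hun : ‖x / w ^ 3‖ ≤ 1 := by
    rw [norm_div, norm_pow, hwn, div_self hxne]
  set U : ℤ_[p] := ⟨x / w ^ 3, hun⟩ with hU
  have hsub : (1 : ℚ_[p]) - x / w ^ 3 = 27 / w ^ 3 := by
    field_simp
    linear_combination hw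
  have h3 : ‖(27 : ℚ_[p])‖ = ‖(3 : ℚ_[p])‖ ^ 3 := by
    rw [← norm_pow]; norm_num
  have hp1 : (0 : ℝ) < (p : ℝ)⁻¹ := by
    have := (Fact.out : p.Prime).pos
    positivity
  have hplt : (p : ℝ)⁻¹ < 1 := by
    have h2p : (1 : ℝ) < p := by exact_mod_cast (Fact.out : p.Prime).one_lt
    exact inv_lt_one_of_one_lt₀ h2p
  have h3pos : 0 < ‖(3 : ℚ_[p])‖ := by
    rw [norm_pos_iff]
    norm_num
  have h3le : ‖(3 : ℚ_[p])‖ ≤ 1 := by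
    have e : ((3 : ℤ_[p]) : ℚ_[p]) = (3 : ℚ_[p]) := by norm_cast
    rw [← e]; exact PadicInt.norm_le_one _
  have hkey : ‖(1 : ℚ_[p]) - x / w ^ 3‖ < ‖(3 : ℚ_[p])‖ ^ 2 := by
    rw [hsub]
    have e : ‖(27 : ℚ_[p]) / w ^ 3‖ = ‖(3 : ℚ_[p])‖ ^ 3 * ‖w⁻¹‖ ^ 3 := by
      rw [div_eq_mul_inv, norm_mul, ← inv_pow, norm_pow, h3]
    rw [e]
    have ht : ‖w⁻¹‖ ^ 3 < 1 := pow_lt_one₀ (norm_nonneg _) hwilt (by norm_num)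
    have h32 : ‖(3 : ℚ_[p])‖ ^ 3 ≤ ‖(3 : ℚ_[p])‖ ^ 2 := by nlinarith
    calc ‖(3 : ℚ_[p])‖ ^ 3 * ‖w⁻¹‖ ^ 3 < ‖(3 : ℚ_[p])‖ ^ 3 * 1 :=
          mul_lt_mul_of_pos_left ht (pow_pos h3pos 3)
      _ ≤ ‖(3 : ℚ_[p])‖ ^ 2 := by simpa using h32
  set F : Polynomial ℤ_[p] := Polynomial.X ^ 3 - Polynomial.C U with hF
  have hev1 : F.eval 1 = 1 - U := by simp [hF]
  have hdev : F.derivative.eval 1 = 3 := by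
    simp [hF, Polynomial.derivative_pow]
  have hnorm : ‖F.eval 1‖ < ‖F.derivative.eval 1‖ ^ 2 := by
    rw [hev1, hdev]
    have e1 : ‖(1 - U : ℤ_[p])‖ = ‖(1 : ℚ_[p]) - x / w ^ 3‖ := by
      rw [← PadicInt.padic_norm_e_of_padicInt]
      push_cast [hU]
      rfl
    have e2 : ‖(3 : ℤ_[p])‖ = ‖(3 : ℚ_[p])‖ := by
      rw [← PadicInt.padic_norm_e_of_padicInt]
      norm_cast
    rw [e1, e2]
    exact hkey
  obtain ⟨z, hz, -⟩ := hensels_lemma hnorm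
  have hz' : (z : ℚ_[p]) ^ 3 = x / w ^ 3 := by
    have hzU : z ^ 3 = U := by
      rw [hF] at hz
      simpa [sub_eq_zero] using hz
    calc (z : ℚ_[p]) ^ 3 = ((z ^ 3 : ℤ_[p]) : ℚ_[p]) := by push_cast; ring
      _ = (U : ℚ_[p]) := by rw [hzU]
      _ = x / w ^ 3 := rfl
  refine h2 ⟨w * z, ?_⟩
  rw [mul_pow, hz']
  field_simp
end

section
/- Let p be a prime and x ∈ Q_p nonzero. If there is no y ∈ Q_p with y^2 + y = x and no y ∈ Q_p with y^2 + y = x^{-1}, then x is a unit of Z_p (i.e., v(x) = 0). -/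
open Polynomial

lemma solvable_of_norm_lt_one (p : ℕ) [Fact p.Prime] (x : ℚ_[p]) (hx : ‖x‖ < 1) :
    ∃ y : ℚ_[p], y ^ 2 + y = x := by
  set x' : ℤ_[p] := ⟨x, le_of_lt hx⟩ with hx'
  have hnorm : ‖(X ^ 2 + X - C x' : Polynomial ℤ_[p]).eval 0‖ <
      ‖(X ^ 2 + X - C x' : Polynomial ℤ_[p]).derivative.eval 0‖ ^ 2 := by
    simp
    exact hx
  obtain ⟨z, hz, -⟩ := hensels_lemma hnorm
  refine ⟨(z : ℚ_[p]), ?_⟩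
  have : z ^ 2 + z - x' = 0 := by simpa using hz
  have : z ^ 2 + z = x' := by linear_combination this
  exact_mod_cast congrArg (PadicInt.Coe.ringHom) this

theorem stmt_11 (p : ℕ) [Fact p.Prime] (x : ℚ_[p]) (hx : x ≠ 0)
    (h1 : ¬ ∃ y : ℚ_[p], y ^ 2 + y = x) (h2 : ¬ ∃ y : ℚ_[p], y ^ 2 + y = x⁻¹) :
    x.valuation = 0 := by
  rcases lt_trichotomy ‖x‖ 1 with h | h | h
  · exact absurd (solvable_of_norm_lt_one p x h) h1
  · have := Padic.norm_eq_zpow_neg_valuation hx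
    rw [h] at this
    have hp1 : (1:ℝ) < (p:ℝ) := by exact_mod_cast (Fact.out : p.Prime).one_lt
    have := zpow_right_injective₀ (by linarith) (by linarith) (a := (p:ℝ))
      (this.symm.trans (zpow_zero _).symm)
    linarith [neg_eq_zero.mp this]
  · have hinv : ‖x⁻¹‖ < 1 := by
      rw [norm_inv]
      exact inv_lt_one_of_one_lt₀ h
    exact absurd (solvable_of_norm_lt_one p x⁻¹ hinv) h2
end

section
/- Let p be an odd prime. Then Z_p = { x ∈ Q_p : ∃ w ∈ Q_p, 1 + p·x^2 = w^2 }. -/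
open Polynomial

theorem stmt_12 (p : ℕ) [Fact p.Prime] (hp : p ≠ 2) :
    {x : ℚ_[p] | ∃ z : ℤ_[p], (z : ℚ_[p]) = x} =
      {x : ℚ_[p] | ∃ w : ℚ_[p], 1 + (p : ℚ_[p]) * x ^ 2 = w ^ 2} := by
  have hp1 : (1:ℝ) < p := by exact_mod_cast (Fact.out : p.Prime).one_lt
  have hp0 : (0:ℝ) < p := lt_trans one_pos hp1
  have hpne1 : (p:ℝ) ≠ 1 := ne_of_gt hp1
  ext x
  simp only [Set.mem_setOf_eq]
  constructor
  · rintro ⟨z, rfl⟩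
    set F : Polynomial ℤ_[p] := X ^ 2 - C (1 + p * z ^ 2) with hF
    have heval : F.eval 1 = -(p * z ^ 2) := by simp [hF]
    have hderiv : F.derivative.eval 1 = 2 := by
      simp [hF, Polynomial.derivative_sub, Polynomial.derivative_pow]
    have h2 : ‖(2 : ℤ_[p])‖ = 1 := by
      refine le_antisymm (PadicInt.norm_le_one _) ?_
      by_contra h
      push_neg at h
      have hd : (p : ℤ) ∣ 2 := (PadicInt.norm_int_lt_one_iff_dvd 2).mp (by exact_mod_cast h)
      have h2le : (p : ℤ) ≤ 2 := Int.le_of_dvd (by norm_num) hd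
      have := (Fact.out : p.Prime).two_le
      omega
    have hnorm : ‖F.eval 1‖ < ‖F.derivative.eval 1‖ ^ 2 := by
      rw [heval, hderiv, h2, one_pow, norm_neg]
      calc ‖(p : ℤ_[p]) * z ^ 2‖ ≤ ‖(p:ℤ_[p])‖ * 1 := by
            rw [norm_mul]
            exact mul_le_mul_of_nonneg_left (PadicInt.norm_le_one _) (norm_nonneg _)
        _ = (p:ℝ)⁻¹ := by rw [PadicInt.norm_p, mul_one]
        _ < 1 := inv_lt_one_of_one_lt₀ hp1
    obtain ⟨w, hw, -⟩ := hensels_lemma hnorm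
    refine ⟨(w : ℚ_[p]), ?_⟩
    have hw2 : w ^ 2 = 1 + p * z ^ 2 := by
      have := hw
      simp only [hF, Polynomial.eval_sub, Polynomial.eval_pow, Polynomial.eval_X,
        Polynomial.eval_C, sub_eq_zero, Polynomial.coe_aeval_eq_eval] at this
      exact this
    have hcast : ((w ^ 2 : ℤ_[p]) : ℚ_[p]) = ((1 + p * z ^ 2 : ℤ_[p]) : ℚ_[p]) := by rw [hw2]
    push_cast at hcast
    exact hcast.symm
  · rintro ⟨w, hw⟩
    have hx1 : ‖x‖ ≤ 1 := by
      by_contra h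
      push_neg at h
      have hx0 : x ≠ 0 := by rintro rfl; simp at h; linarith
      set a : ℚ_[p] := (p : ℚ_[p]) * x ^ 2 with ha
      have hpq : (p : ℚ_[p]) ≠ 0 := by
        exact_mod_cast (Fact.out : p.Prime).ne_zero
      have ha0 : a ≠ 0 := mul_ne_zero hpq (pow_ne_zero 2 hx0)
      have hvx : x.valuation < 0 := by
        have hn := Padic.norm_eq_zpow_neg_valuation hx0
        rw [hn] at h
        have : (p:ℝ) ^ (0:ℤ) < (p:ℝ) ^ (-x.valuation) := by simpa using h
        have := (zpow_lt_zpow_iff_right₀ hp1).mp this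
        omega
      have hva : a.valuation = 1 + 2 * x.valuation := by
        rw [ha, Padic.valuation_mul hpq (pow_ne_zero 2 hx0), Padic.valuation_p,
          sq, Padic.valuation_mul hx0 hx0]
        ring
      have hna : ‖a‖ = (p:ℝ) ^ (-(1 + 2 * x.valuation)) := by
        rw [Padic.norm_eq_zpow_neg_valuation ha0, hva]
      have hne : ‖(1:ℚ_[p])‖ ≠ ‖a‖ := by
        rw [norm_one, hna]
        intro hcon
        have : (p:ℝ) ^ (0:ℤ) = (p:ℝ) ^ (-(1 + 2 * x.valuation)) := by simpa using hcon
        have := zpow_right_injective₀ hp0 hpne1 this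
        omega
      have hsum : ‖1 + a‖ = ‖a‖ := by
        rw [Padic.add_eq_max_of_ne hne, norm_one]
        rw [max_eq_right]
        rw [hna, ← zpow_zero (p:ℝ)]
        apply zpow_le_zpow_right₀ hp1.le
        omega
      have hw0 : w ≠ 0 := by
        rintro rfl
        rw [zero_pow (by norm_num : (2:ℕ) ≠ 0)] at hw
        have ham : a = -1 := eq_neg_of_add_eq_zero_right hw
        exact hne (by rw [ham, norm_neg])
      have hvw : (w ^ 2).valuation = 2 * w.valuation := by
        rw [sq, Padic.valuation_mul hw0 hw0]; ring
      have hnw : ‖w ^ 2‖ = (p:ℝ) ^ (-(2 * w.valuation)) := by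
        rw [Padic.norm_eq_zpow_neg_valuation (pow_ne_zero 2 hw0), hvw]
      rw [hw, hnw, hna] at hsum
      have := zpow_right_injective₀ hp0 hpne1 hsum
      omega
    exact ⟨⟨x, hx1⟩, rfl⟩
end

section
/- Let p be a prime with p ≠ 3. Then Z_p = { x ∈ Q_p : ∃ w ∈ Q_p, 1 + p·x^3 = w^3 }. -/
theorem stmt_13 (p : ℕ) [Fact p.Prime] (hp : p ≠ 3) :
    {x : ℚ_[p] | ∃ z : ℤ_[p], (z : ℚ_[p]) = x} =
      {x : ℚ_[p] | ∃ w : ℚ_[p], 1 + (p : ℚ_[p]) * x ^ 3 = w ^ 3} := by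
  have hp1 : (1:ℝ) < (p:ℝ) := by exact_mod_cast (Fact.out : p.Prime).one_lt
  ext x
  simp only [Set.mem_setOf_eq]
  constructor
  · rintro ⟨z, rfl⟩
    -- Hensel's lemma
    set F : Polynomial ℤ_[p] := Polynomial.X ^ 3 - Polynomial.C (1 + p * z ^ 3) with hF
    have heval : F.eval 1 = -(p * z ^ 3) := by simp [hF]
    have hderiv : F.derivative.eval 1 = 3 := by
      rw [hF, Polynomial.derivative_sub, Polynomial.derivative_C, Polynomial.derivative_pow]
      simp
    have h3 : ‖(3 : ℤ_[p])‖ = 1 := by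
      rcases lt_or_eq_of_le (PadicInt.norm_le_one (3 : ℤ_[p])) with h | h
      · exfalso
        rw [show ((3:ℤ_[p])) = ((3:ℤ) : ℤ_[p]) by norm_cast,
          PadicInt.norm_int_lt_one_iff_dvd] at h
        have h' : p ∣ 3 := by exact_mod_cast h
        exact hp ((Nat.prime_dvd_prime_iff_eq Fact.out (by norm_num)).1 h')
      · exact h
    have hnorm : ‖F.eval 1‖ < ‖F.derivative.eval 1‖ ^ 2 := by
      rw [heval, hderiv, h3, norm_neg, norm_mul, norm_pow, one_pow]
      calc ‖(p:ℤ_[p])‖ * ‖z‖ ^ 3 ≤ ‖(p:ℤ_[p])‖ * 1 := by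
            gcongr
            exact pow_le_one₀ (norm_nonneg _) (PadicInt.norm_le_one z)
        _ = (p:ℝ)⁻¹ := by rw [mul_one, PadicInt.norm_p]
        _ < 1 := by rw [inv_lt_one_iff₀]; right; exact hp1
    obtain ⟨z₀, hz₀, -⟩ := hensels_lemma hnorm
    refine ⟨(z₀ : ℚ_[p]), ?_⟩
    have : (z₀ : ℤ_[p]) ^ 3 = 1 + p * z ^ 3 := by
      have := hz₀
      simp [hF, sub_eq_zero] at this
      exact this
    exact_mod_cast congrArg (fun t : ℤ_[p] => (t : ℚ_[p])) this.symm
  · rintro ⟨w, hw⟩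
    refine ⟨⟨x, ?_⟩, rfl⟩
    by_contra h
    push_neg at h
    have hx0 : x ≠ 0 := by rintro rfl; simp at h; linarith
    have hvx : x.valuation < 0 := by
      by_contra hv
      exact absurd ((Padic.norm_le_one_iff_val_nonneg x).2 (not_lt.1 hv)) (not_le.2 h)
    have hp0 : (p:ℚ_[p]) ≠ 0 := by exact_mod_cast (Fact.out : p.Prime).ne_zero
    have hnx : ‖(p:ℚ_[p]) * x ^ 3‖ = (p:ℝ) ^ (-(1 + 3 * x.valuation)) := by
      rw [norm_mul, norm_pow, Padic.norm_p, Padic.norm_eq_zpow_neg_valuation hx0,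
        ← zpow_natCast ((p:ℝ) ^ (-x.valuation)) 3, ← zpow_mul, ← zpow_neg_one,
        ← zpow_add₀ (by positivity : (p:ℝ) ≠ 0)]
      ring_nf
    have hbig : (1:ℝ) < ‖(p:ℚ_[p]) * x ^ 3‖ := by
      rw [hnx]
      apply one_lt_zpow₀ hp1
      omega
    have hne : ‖(1:ℚ_[p])‖ ≠ ‖(p:ℚ_[p]) * x ^ 3‖ := by rw [norm_one]; exact ne_of_lt hbig
    have hsum : ‖1 + (p:ℚ_[p]) * x ^ 3‖ = (p:ℝ) ^ (-(1 + 3 * x.valuation)) := by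
      rw [Padic.add_eq_max_of_ne hne, norm_one, max_eq_right (le_of_lt hbig), hnx]
    have hw0 : w ≠ 0 := by
      rintro rfl
      rw [hw] at hsum
      norm_num at hsum
      exact absurd hsum.symm (ne_of_gt (by positivity))
    have hwn : ‖w ^ 3‖ = (p:ℝ) ^ (-(3 * w.valuation)) := by
      rw [norm_pow, Padic.norm_eq_zpow_neg_valuation hw0, ← zpow_natCast ((p:ℝ) ^ (-w.valuation)) 3,
        ← zpow_mul]
      ring_nf
    rw [hw, hwn] at hsum
    have := zpow_right_injective₀ (by positivity) (ne_of_gt hp1) hsum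
    omega
end
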